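/- arXiv:2102.12967 — 2 statements merged into one kernel-verified Lean document; each statement's English description precedes it below -/
import Mathlib

section
/- Simes' test is valid for independent uniform p-values: if q_1, ..., q_m are i.i.d. Uniform[0,1] with order statistics q_(1) ≤ ... ≤ q_(m), then the Simes statistic T = min_{i∈{1,...,m}} q_(i)·m/i satisfies P(T ≤ α) = α for all α ∈ [0,1], i.e., T is uniformly distributed on [0,1]. -/
/-!
Write `β = α / m`. By induction on the dimension, the set of points of the cube `[0, t)ⁿ` accepted
by Simes' test with thresholds `β, 2β, …, nβ` has volume `tⁿ - nβ tⁿ⁻¹` whenever `nβ ≤ t`.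
Almost every point has a unique largest coordinate `s`; a point whose largest coordinate is `s`
is accepted iff `s > nβ` and the remaining coordinates form an accepted point of `[0, s)ⁿ⁻¹`.
Integrating the induction hypothesis over `s ∈ (nβ, t)` and summing over the `n` possible
positions of the maximum gives the formula. Independence makes the law of the p-value vector
the Lebesgue measure on `[0, 1)ᵐ`, so `P(T ≤ α) = 1 - (1 - mβ) = α`.
-/

open MeasureTheory ProbabilityTheory
open scoped ENNReal
open Finset

section Counting

variable {α : Type*} [LinearOrder α] {n : ℕ}

def countLE (c : α) (x : Fin n → α) : ℕ := #{j | x j ≤ c}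

lemma countLE_le (c : α) (x : Fin n → α) : countLE c x ≤ n :=
  (card_filter_le _ _).trans_eq (card_fin n)

lemma countLE_eq_of_forall_le {c : α} {x : Fin n → α} (h : ∀ j, x j ≤ c) : countLE c x = n := by
  rw [countLE, filter_true_of_mem fun j _ => h j, card_univ, Fintype.card_fin]

lemma countLE_insertNth (c s : α) (j : Fin (n + 1)) (y : Fin n → α) :
    countLE c (j.insertNth s y) = (if s ≤ c then 1 else 0) + countLE c y := by
  simp only [countLE, card_filter, Fin.sum_univ_succAbove _ j, Fin.insertNth_apply_same,
    Fin.insertNth_apply_succAbove]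

lemma countLE_comp_perm (c : α) (x : Fin n → α) (σ : Equiv.Perm (Fin n)) :
    countLE c (x ∘ σ) = countLE c x :=
  card_equiv σ (by simp)

lemma Monotone.le_iff_succ_le_countLE {g : Fin n → α} (hg : Monotone g) (i : Fin n) (c : α) :
    g i ≤ c ↔ (i : ℕ) + 1 ≤ countLE c g := by
  constructor
  · intro h
    have hsub : Iic i ⊆ ({k | g k ≤ c} : Finset (Fin n)) := fun k hk =>
      mem_filter.mpr ⟨mem_univ k, (hg (mem_Iic.mp hk)).trans h⟩
    simpa [countLE] using card_le_card hsub
  · intro h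
    by_contra! hlt
    have hsub : ({k | g k ≤ c} : Finset (Fin n)) ⊆ Iio i := fun k hk =>
      mem_Iio.mpr (hg.reflect_lt (((mem_filter.mp hk).2).trans_lt hlt))
    have := card_le_card hsub
    rw [Fin.card_Iio] at this
    rw [countLE] at h
    omega

lemma sort_le_iff_succ_le_countLE (x : Fin n → α) (i : Fin n) (c : α) :
    x (Tuple.sort x i) ≤ c ↔ (i : ℕ) + 1 ≤ countLE c x := by
  rw [← countLE_comp_perm c x (Tuple.sort x)]
  exact (Tuple.monotone_sort x).le_iff_succ_le_countLE i c

end Counting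

/-- `x` is accepted by Simes' test at level `n * β`: its `(i + 1)`-st smallest coordinate exceeds
`(i + 1) * β` for every `i` (see `sort_le_iff_succ_le_countLE`). -/
def simesAccept (n : ℕ) (β : ℝ) : Set (Fin n → ℝ) :=
  {x | ∀ i : Fin n, countLE (((i : ℕ) + 1) * β) x ≤ i}

lemma measurable_countLE {n : ℕ} (c : ℝ) : Measurable (countLE (n := n) c) := by
  have h : countLE (n := n) c = fun x => ∑ j, if x j ≤ c then 1 else 0 :=
    funext fun x => card_filter _ _
  rw [h]
  exact Finset.measurable_sum _ fun j _ =>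
    Measurable.ite (measurableSet_le (measurable_pi_apply j) measurable_const)
      measurable_const measurable_const

lemma measurableSet_simesAccept (n : ℕ) (β : ℝ) : MeasurableSet (simesAccept n β) := by
  rw [simesAccept, Set.ofPred_forall]
  exact .iInter fun i => measurable_countLE _ measurableSet_Iic

lemma insertNth_mem_simesAccept_iff {n : ℕ} {β s : ℝ} (hβ : 0 ≤ β) (j : Fin (n + 1))
    {y : Fin n → ℝ} (hy : ∀ k, y k < s) :
    j.insertNth s y ∈ simesAccept (n + 1) β ↔ (n + 1) * β < s ∧ y ∈ simesAccept n β := by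
  simp only [simesAccept, Set.mem_ofPred_eq, Fin.forall_fin_succ', Fin.val_last,
    Fin.val_castSucc, countLE_insertNth]
  by_cases hs : (n + 1) * β < s
  · have hlt : ∀ i : ℕ, i ≤ n → ¬ s ≤ (i + 1) * β := fun i hi =>
      not_le.mpr (lt_of_le_of_lt (by gcongr) hs)
    simp only [hs, true_and, if_neg (hlt n le_rfl), zero_add, countLE_le, and_true]
    exact forall_congr' fun i => by rw [if_neg (hlt i i.is_le'), zero_add]
  · have hall : countLE ((n + 1) * β) y = n :=
      countLE_eq_of_forall_le fun k => (hy k).le.trans (not_lt.mp hs)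
    simp [hs, not_lt.mp hs, hall]

lemma volume_setOf_apply_eq_apply {ι : Type*} [Fintype ι] {j k : ι} (hjk : j ≠ k) :
    volume {x : ι → ℝ | x j = x k} = 0 := by
  classical
  let diag : Submodule ℝ (ι → ℝ) := (LinearMap.proj j).eqLocus (LinearMap.proj k)
  refine Measure.addHaar_submodule volume diag fun htop => ?_
  have h : Pi.single (M := fun _ => ℝ) j 1 ∈ diag := htop ▸ Submodule.mem_top
  simp [diag, hjk.symm] at h

lemma measurableSet_setOf_forall_ne_lt {ι : Type*} [Countable ι] (j : ι) :
    MeasurableSet {x : ι → ℝ | ∀ k, k ≠ j → x k < x j} := by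
  simp only [Set.ofPred_forall]
  exact .iInter fun k => .iInter fun _ =>
    measurableSet_lt (measurable_pi_apply k) (measurable_pi_apply j)

lemma measure_eq_sum_inter_isStrictMax {ι : Type*} [Fintype ι] [Nonempty ι]
    {μ : Measure (ι → ℝ)} (hties : ∀ j k, j ≠ k → μ {x | x j = x k} = 0)
    {S : Set (ι → ℝ)} (hS : MeasurableSet S) :
    μ S = ∑ j, μ (S ∩ {x | ∀ k, k ≠ j → x k < x j}) := by
  set ties := ⋃ (j) (k) (_ : j ≠ k), {x : ι → ℝ | x j = x k}
  set part : ι → Set (ι → ℝ) := fun j => S ∩ {x | ∀ k, k ≠ j → x k < x j}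
  have hmeas : ∀ j, MeasurableSet (part j) := fun j =>
    hS.inter (measurableSet_setOf_forall_ne_lt j)
  have hdisj : Pairwise (Function.onFun Disjoint part) :=
    fun j j' hjj' => Set.disjoint_left.mpr fun x ⟨_, h⟩ ⟨_, h'⟩ =>
      (h j' hjj'.symm).asymm (h' j hjj')
  have hcover : S \ ties ⊆ ⋃ j, part j := by
    rintro x ⟨hx, hxt⟩
    obtain ⟨j, hj⟩ := Finite.exists_max x
    refine Set.mem_iUnion.mpr ⟨j, hx, fun k hkj => (hj k).lt_of_ne fun hxk => hxt ?_⟩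
    exact Set.mem_iUnion₂.mpr ⟨k, j, Set.mem_iUnion.mpr ⟨hkj, hxk⟩⟩
  rw [← tsum_fintype (L := .unconditional _), ← measure_iUnion hdisj hmeas]
  refine le_antisymm ?_ (measure_mono (Set.iUnion_subset fun j => Set.inter_subset_left))
  calc μ S = μ (S \ ties) := (measure_sdiff_null (measure_iUnion_null fun j =>
          measure_iUnion_null fun k => measure_iUnion_null (hties j k))).symm
    _ ≤ _ := measure_mono hcover

-- For `n = 0` the truncated exponent `n - 1` is harmless, its coefficient being `0`.
def simesAcceptVolume (n : ℕ) (β t : ℝ) : ℝ := t ^ n - n * β * t ^ (n - 1)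

lemma simesAcceptVolume_nonneg {n : ℕ} {β t : ℝ} (hβ : 0 ≤ β) (ht : n * β ≤ t) :
    0 ≤ simesAcceptVolume n β t := by
  cases n with
  | zero => simp [simesAcceptVolume]
  | succ n =>
    have ht0 : 0 ≤ t := (by positivity : (0 : ℝ) ≤ (n + 1 : ℕ) * β).trans ht
    have : simesAcceptVolume (n + 1) β t = t ^ n * (t - (n + 1 : ℕ) * β) := by
      simp only [simesAcceptVolume, Nat.add_sub_cancel]; ring
    rw [this]
    exact mul_nonneg (pow_nonneg ht0 n) (sub_nonneg.mpr ht)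

lemma integral_simesAcceptVolume (n : ℕ) (β a t : ℝ) :
    ∫ s in a..t, simesAcceptVolume n β s
      = (t ^ (n + 1) - a ^ (n + 1)) / (n + 1) - β * (t ^ n - a ^ n) := by
  have hderiv : ∀ s, HasDerivAt (fun s : ℝ => s ^ (n + 1) / (n + 1) - β * s ^ n)
      (simesAcceptVolume n β s) s := fun s => by
    refine (((hasDerivAt_pow (n + 1) s).div_const ((n : ℝ) + 1)).sub
      ((hasDerivAt_pow n s).const_mul β)).congr_deriv ?_
    simp only [simesAcceptVolume, Nat.add_sub_cancel]
    push_cast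
    field_simp
  rw [intervalIntegral.integral_eq_sub_of_hasDerivAt (fun s _ => hderiv s)
    ((by unfold simesAcceptVolume; fun_prop : Continuous _).intervalIntegrable _ _)]
  ring

lemma natCast_succ_mul_lintegral_simesAcceptVolume {n : ℕ} {β t : ℝ} (hβ : 0 ≤ β)
    (ht : (n + 1) * β ≤ t) :
    ((n : ℝ≥0∞) + 1) * ∫⁻ s in Set.Ioo ((n + 1) * β) t, ENNReal.ofReal (simesAcceptVolume n β s)
      = ENNReal.ofReal (simesAcceptVolume (n + 1) β t) := by
  have hnonneg : 0 ≤ᵐ[volume.restrict (Set.Ioo ((n + 1) * β) t)] simesAcceptVolume n β :=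
    (ae_restrict_iff' measurableSet_Ioo).mpr (ae_of_all _ fun s hs =>
      simesAcceptVolume_nonneg hβ (by nlinarith [hs.1]))
  have hint : IntegrableOn (simesAcceptVolume n β) (Set.Ioo ((n + 1) * β) t) :=
    (by unfold simesAcceptVolume; fun_prop : Continuous _).integrableOn_Icc.mono_set
      Set.Ioo_subset_Icc_self
  rw [← ofReal_integral_eq_lintegral_ofReal hint hnonneg, ← integral_Ioc_eq_integral_Ioo,
    ← intervalIntegral.integral_of_le ht, integral_simesAcceptVolume,
    ← ENNReal.ofReal_natCast, ← ENNReal.ofReal_one,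
    ← ENNReal.ofReal_add (by positivity) zero_le_one, ← ENNReal.ofReal_mul (by positivity)]
  congr 1
  simp only [simesAcceptVolume, Nat.add_sub_cancel]
  push_cast
  field_simp
  ring

lemma insertNth_mem_simesAccept_inter_iff {n : ℕ} {β s t : ℝ} (hβ : 0 ≤ β) (j : Fin (n + 1))
    (y : Fin n → ℝ) :
    (j.insertNth s y : Fin (n + 1) → ℝ) ∈
        simesAccept (n + 1) β ∩ Set.univ.pi (fun _ => Set.Ico 0 t) ∩ {x | ∀ k, k ≠ j → x k < x j}
      ↔ s ∈ Set.Ioo ((n + 1) * β) t ∧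
          y ∈ simesAccept n β ∩ Set.univ.pi (fun _ => Set.Ico 0 s) := by
  set x : Fin (n + 1) → ℝ := j.insertNth s y with hx
  have hmax : (∀ k, k ≠ j → x k < x j) ↔ ∀ k, y k < s := by
    simp [hx, Fin.forall_iff_succAbove j, Fin.succAbove_ne]
  have hcube : x ∈ Set.univ.pi (fun _ => Set.Ico 0 t)
      ↔ s ∈ Set.Ico 0 t ∧ ∀ k, y k ∈ Set.Ico 0 t := by
    simp [hx, Fin.forall_iff_succAbove j]
  simp only [Set.mem_inter_iff, Set.mem_ofPred_eq, hmax, hcube, Set.mem_univ_pi, Set.mem_Ico,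
    Set.mem_Ioo]
  constructor
  · rintro ⟨⟨hacc, ⟨-, hst⟩, hyt⟩, hys⟩
    obtain ⟨hsβ, hy⟩ := (insertNth_mem_simesAccept_iff hβ j hys).mp hacc
    exact ⟨⟨hsβ, hst⟩, hy, fun k => ⟨(hyt k).1, hys k⟩⟩
  · rintro ⟨⟨hsβ, hst⟩, hy, hys⟩
    have hys' : ∀ k, y k < s := fun k => (hys k).2
    have hs0 : 0 ≤ s := (by positivity : (0 : ℝ) ≤ (n + 1) * β).trans hsβ.le
    exact ⟨⟨(insertNth_mem_simesAccept_iff hβ j hys').mpr ⟨hsβ, hy⟩, ⟨hs0, hst⟩,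
      fun k => ⟨(hys k).1, (hys' k).trans hst⟩⟩, hys'⟩

lemma measurableSet_simesAccept_inter_pi_Ico (n : ℕ) (β t : ℝ) :
    MeasurableSet (simesAccept n β ∩ Set.univ.pi fun _ => Set.Ico 0 t) :=
  (measurableSet_simesAccept n β).inter (.univ_pi fun _ => measurableSet_Ico)

lemma volume_simesAccept_inter_pi_Ico_inter_isStrictMax {n : ℕ} {β t : ℝ} (hβ : 0 ≤ β)
    (j : Fin (n + 1)) :
    volume (simesAccept (n + 1) β ∩ (Set.univ.pi fun _ => Set.Ico 0 t) ∩
        {x | ∀ k, k ≠ j → x k < x j})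
      = ∫⁻ s in Set.Ioo ((n + 1) * β) t,
          volume (simesAccept n β ∩ Set.univ.pi fun _ => Set.Ico 0 s) := by
  set e := MeasurableEquiv.piFinSuccAbove (fun _ : Fin (n + 1) => ℝ) j
  have hmp : MeasurePreserving e.symm volume volume :=
    (volume_preserving_piFinSuccAbove (fun _ => ℝ) j).symm
  have hmeas := (measurableSet_simesAccept_inter_pi_Ico (n + 1) β t).inter
    (measurableSet_setOf_forall_ne_lt j)
  rw [← hmp.measure_preimage_equiv, Measure.volume_eq_prod,
    Measure.prod_apply (e.symm.measurable hmeas), ← lintegral_indicator measurableSet_Ioo]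
  refine lintegral_congr fun s => ?_
  have hslice : Prod.mk s ⁻¹' (e.symm ⁻¹' (simesAccept (n + 1) β ∩
        (Set.univ.pi fun _ => Set.Ico 0 t) ∩ {x | ∀ k, k ≠ j → x k < x j}))
      = {y | s ∈ Set.Ioo ((n + 1) * β) t ∧
          y ∈ simesAccept n β ∩ Set.univ.pi fun _ => Set.Ico 0 s} :=
    Set.ext fun y => insertNth_mem_simesAccept_inter_iff hβ j y
  by_cases hs : s ∈ Set.Ioo ((n + 1) * β) t
  · rw [hslice, Set.indicator_of_mem hs]
    simp only [hs, true_and, Set.ofPred_mem_eq]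
  · rw [hslice, Set.indicator_of_notMem hs]
    simp [hs]

theorem volume_simesAccept_inter_pi_Ico {n : ℕ} {β t : ℝ} (hβ : 0 ≤ β) (ht : n * β ≤ t) :
    volume (simesAccept n β ∩ Set.univ.pi fun _ => Set.Ico 0 t)
      = ENNReal.ofReal (simesAcceptVolume n β t) := by
  induction n generalizing t with
  | zero => simp [simesAcceptVolume, simesAccept, Real.volume_pi_Ico]
  | succ n ih =>
    push_cast at ht
    rw [measure_eq_sum_inter_isStrictMax (fun _ _ => volume_setOf_apply_eq_apply)
      (measurableSet_simesAccept_inter_pi_Ico _ β t)]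
    simp only [volume_simesAccept_inter_pi_Ico_inter_isStrictMax hβ, sum_const, card_univ,
      Fintype.card_fin, nsmul_eq_mul, Nat.cast_add, Nat.cast_one]
    rw [setLIntegral_congr_fun measurableSet_Ioo fun s hs => ih (by nlinarith [hs.1])]
    exact natCast_succ_mul_lintegral_simesAcceptVolume hβ ht

lemma inf'_mul_sort_le_iff_notMem_simesAccept {m : ℕ} (hne : (univ : Finset (Fin m)).Nonempty)
    (x : Fin m → ℝ) (α : ℝ) :
    univ.inf' hne (fun i : Fin m => ((m : ℝ) / ((i : ℕ) + 1)) * x (Tuple.sort x i)) ≤ α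
      ↔ x ∉ simesAccept m (α / m) := by
  have hm : (0 : ℝ) < m := Nat.cast_pos.mpr (Fin.pos_iff_nonempty.mpr (univ_nonempty_iff.mp hne))
  simp only [inf'_le_iff, mem_univ, true_and, simesAccept, Set.mem_ofPred_eq, not_forall, not_le]
  refine exists_congr fun i => ?_
  have hthreshold : ((i : ℕ) + 1) * (α / m) = α / (m / ((i : ℕ) + 1)) := by field_simp
  rw [Nat.lt_iff_add_one_le, ← sort_le_iff_succ_le_countLE, hthreshold,
    le_div_iff₀' (by positivity)]

lemma map_eq_volume_restrict_pi_Ico {Ω ι : Type*} [MeasurableSpace Ω] {μ : Measure Ω}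
    [IsProbabilityMeasure μ] [Fintype ι] {q : ι → Ω → ℝ} (hq : ∀ i, AEMeasurable (q i) μ)
    (hindep : iIndepFun q μ) (hunif : ∀ i, μ.map (q i) = volume.restrict (Set.Icc 0 1)) :
    μ.map (fun ω i => q i ω) = volume.restrict (Set.univ.pi fun _ => Set.Ico 0 1) := by
  rw [(iIndepFun_iff_map_fun_eq_pi_map hq).mp hindep, volume_pi, Measure.restrict_pi_pi]
  congr 1
  funext i
  rw [hunif i]
  exact Measure.restrict_congr_set Ico_ae_eq_Icc.symm

/-- Simes' test is exactly valid for `m` i.i.d. Uniform[0,1] p-values: the Simes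
statistic `min_i (m/i)·q_(i)` (where `q_(1) ≤ ⋯ ≤ q_(m)` are the order statistics,
obtained here by sorting the vector of p-values) is itself Uniform[0,1]. -/
theorem stmt6 {Ω : Type*} [MeasurableSpace Ω] (μ : Measure Ω) [IsProbabilityMeasure μ]
    (m : ℕ) (hm : 0 < m) (q : Fin m → Ω → ℝ) (hmeas : ∀ i, Measurable (q i))
    (hindep : iIndepFun q μ)
    (hunif : ∀ i, μ.map (q i) = volume.restrict (Set.Icc (0 : ℝ) 1)) :
    ∀ α ∈ Set.Icc (0 : ℝ) 1,
      μ {ω | Finset.univ.inf'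
          (@Finset.univ_nonempty (Fin m) _ (Fin.pos_iff_nonempty.mp hm))
          (fun i : Fin m =>
            ((m : ℝ) / ((i : ℕ) + 1)) * (fun j => q j ω) (Tuple.sort (fun j => q j ω) i))
        ≤ α} = ENNReal.ofReal α := by
  rintro α ⟨hα0, hα1⟩
  have hX : Measurable fun ω j => q j ω := measurable_pi_lambda _ hmeas
  have hA := measurableSet_simesAccept m (α / m)
  have hmβ : (m : ℝ) * (α / m) = α := mul_div_cancel₀ _ (by positivity)
  rw [show {ω | _ ≤ α} = (fun ω j => q j ω) ⁻¹' (simesAccept m (α / m))ᶜ from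
    Set.ext fun ω => inf'_mul_sort_le_iff_notMem_simesAccept _ (fun j => q j ω) α]
  rw [Set.preimage_compl, prob_compl_eq_one_sub (hX hA), ← Measure.map_apply hX hA,
    map_eq_volume_restrict_pi_Ico (fun i => (hmeas i).aemeasurable) hindep hunif,
    Measure.restrict_apply hA, volume_simesAccept_inter_pi_Ico (by positivity) (hmβ.trans_le hα1)]
  have hvol : simesAcceptVolume m (α / m) 1 = 1 - α := by simp [simesAcceptVolume, hmβ]
  rw [hvol, ENNReal.ofReal_sub _ hα0, ENNReal.ofReal_one,
    ENNReal.sub_sub_cancel ENNReal.one_ne_top (ENNReal.ofReal_le_one.mpr hα1)]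
end

section
/- The empirical-CDF p-value with the +1 correction is valid: let T(X_1), ..., T(X_n), T(X_{n+1}) be exchangeable real random variables (e.g., i.i.d.), and define the p-value of X_{n+1} as q = (1 + ∑_{i=1}^n 1[T(X_i) ≥ T(X_{n+1})]) / (n+1). Then P(q ≤ α) ≤ α for every α ∈ [0,1]. -/
/-!
Write `r_j = #{i | s_j ≤ s_i}` for the rank of the `j`-th score counted from the top, ties
included, so that `q = r_{n+1} / (n+1)` and `q ≤ α` iff `r_{n+1} ≤ k := ⌊α (n+1)⌋`.
Deterministically, at most `k` indices `j` satisfy `r_j ≤ k`: all of them have a score at least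
the smallest score among them, so their number is at most the rank of that smallest one.
Exchangeability makes the events `r_j ≤ k` equiprobable, and summing over `j` gives
`(n+1) P(r_{n+1} ≤ k) ≤ k ≤ α (n+1)`.
-/

open MeasureTheory Finset
open scoped ENNReal

section UpperRank

variable {ι β : Type*} [Fintype ι] [LinearOrder β]

def upperRank (v : ι → β) (j : ι) : ℕ := #{i | v j ≤ v i}

lemma upperRank_comp_perm (v : ι → β) (π : Equiv.Perm ι) (j : ι) :
    upperRank (v ∘ π) j = upperRank v (π j) :=
  card_equiv π fun i => by simp

lemma card_upperRank_le_le (v : ι → β) (k : ℕ) : #{j | upperRank v j ≤ k} ≤ k := by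
  rcases ({j | upperRank v j ≤ k} : Finset ι).eq_empty_or_nonempty with hempty | hne
  · simp [hempty]
  obtain ⟨j₀, hj₀, hmin⟩ := exists_min_image _ v hne
  calc #{j | upperRank v j ≤ k} ≤ upperRank v j₀ :=
        card_le_card fun j hj => mem_filter.2 ⟨mem_univ j, hmin j hj⟩
    _ ≤ k := (mem_filter.1 hj₀).2

lemma upperRank_last {n : ℕ} (v : Fin (n + 1) → β) :
    upperRank v (Fin.last n) = #{i : Fin n | v (Fin.last n) ≤ v i.castSucc} + 1 := by
  rw [upperRank, card_filter, Fin.sum_univ_castSucc, if_pos le_rfl, card_filter]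

variable [TopologicalSpace β] [OrderClosedTopology β] [SecondCountableTopology β]
  [MeasurableSpace β] [OpensMeasurableSpace β]

lemma measurableSet_upperRank_le (j : ι) (k : ℕ) :
    MeasurableSet {v : ι → β | upperRank v j ≤ k} := by
  have : Measurable fun v : ι → β => upperRank v j := by
    simp only [upperRank, card_filter]
    exact Finset.measurable_sum _ fun i _ =>
      Measurable.ite (measurableSet_le (measurable_pi_apply j) (measurable_pi_apply i))
        measurable_const measurable_const
  exact this (MeasurableSet.of_discrete (s := Set.Iic k))

end UpperRank

section Exchangeable

variable {Ω ι β : Type*} [MeasurableSpace Ω] {μ : Measure Ω} [Fintype ι]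

lemma sum_measure_le_of_forall_card_le {A : ι → Set Ω} [∀ i, DecidablePred (· ∈ A i)]
    (hA : ∀ i, MeasurableSet (A i)) {k : ℕ} (hk : ∀ ω, #{i | ω ∈ A i} ≤ k) :
    ∑ i, μ (A i) ≤ k * μ Set.univ := by
  have hcount : ∀ ω, ∑ i, (A i).indicator 1 ω = (#{i | ω ∈ A i} : ℝ≥0∞) := fun ω => by
    simp only [Set.indicator_apply, Pi.one_apply, card_filter]
    push_cast
    rfl
  calc ∑ i, μ (A i) = ∫⁻ ω, ∑ i, (A i).indicator 1 ω ∂μ := by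
        rw [lintegral_finsetSum _ fun i _ => measurable_one.indicator (hA i)]
        simp only [lintegral_indicator_one (hA _)]
    _ ≤ ∫⁻ _, (k : ℝ≥0∞) ∂μ :=
        lintegral_mono fun ω => hcount ω ▸ Nat.cast_le.2 (hk ω)
    _ = k * μ Set.univ := lintegral_const _

variable [DecidableEq ι] [LinearOrder β] [TopologicalSpace β] [OrderClosedTopology β]
  [SecondCountableTopology β] [MeasurableSpace β] [OpensMeasurableSpace β]
  {X : Ω → ι → β}

def Exchangeable (μ : Measure Ω) (X : Ω → ι → β) : Prop :=
  ∀ π : Equiv.Perm ι, μ.map (fun ω => X ω ∘ π) = μ.map X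

lemma Exchangeable.measure_upperRank_le_eq (hexch : Exchangeable μ X) (hX : Measurable X)
    (i j : ι) (k : ℕ) :
    μ {ω | upperRank (X ω) i ≤ k} = μ {ω | upperRank (X ω) j ≤ k} := by
  have hswap : μ.map (fun ω => X ω ∘ Equiv.swap i j) {v | upperRank v j ≤ k} =
      μ.map X {v | upperRank v j ≤ k} := by
    rw [hexch]
  rw [Measure.map_apply (by fun_prop) (measurableSet_upperRank_le j k),
    Measure.map_apply hX (measurableSet_upperRank_le j k)] at hswap
  simpa [upperRank_comp_perm] using hswap

theorem Exchangeable.card_mul_measure_upperRank_le (hexch : Exchangeable μ X)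
    (hX : Measurable X) (j : ι) (k : ℕ) :
    Fintype.card ι * μ {ω | upperRank (X ω) j ≤ k} ≤ k * μ Set.univ :=
  calc Fintype.card ι * μ {ω | upperRank (X ω) j ≤ k}
      = ∑ i, μ {ω | upperRank (X ω) i ≤ k} := by
        simp [hexch.measure_upperRank_le_eq hX _ j]
    _ ≤ k * μ Set.univ :=
        sum_measure_le_of_forall_card_le (A := fun i => {ω | upperRank (X ω) i ≤ k})
          (fun i => hX (measurableSet_upperRank_le i k)) fun ω => card_upperRank_le_le (X ω) k

end Exchangeable

/-- Validity of the +1-corrected empirical (conformal) p-value: if the scores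
`s 0, …, s n` (calibration scores and test score `s (Fin.last n)`) are exchangeable,
then `q = (1 + #{i ≤ n : s i ≥ s_{n+1}})/(n+1)` satisfies `P(q ≤ α) ≤ α`. -/
theorem stmt11 {Ω : Type*} [MeasurableSpace Ω] (μ : Measure Ω) [IsProbabilityMeasure μ]
    (n : ℕ) (s : Fin (n + 1) → Ω → ℝ) (hmeas : ∀ i, Measurable (s i))
    (hexch : ∀ π : Equiv.Perm (Fin (n + 1)),
      μ.map (fun ω => fun i => s (π i) ω) = μ.map (fun ω => fun i => s i ω))
    (q : Ω → ℝ)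
    (hq : ∀ ω, q ω =
      (1 + ((Finset.univ.filter
        (fun i : Fin n => s i.castSucc ω ≥ s (Fin.last n) ω)).card : ℝ)) / (n + 1)) :
    ∀ α ∈ Set.Icc (0 : ℝ) 1, μ {ω | q ω ≤ α} ≤ ENNReal.ofReal α := by
  rintro α ⟨hα, -⟩
  set k := ⌊α * (n + 1)⌋₊
  have hevent : {ω | q ω ≤ α} = {ω | upperRank (fun i => s i ω) (Fin.last n) ≤ k} := by
    ext ω
    rw [Set.mem_ofPred_eq, Set.mem_ofPred_eq, hq, upperRank_last, div_le_iff₀ (by positivity),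
      Nat.le_floor_iff (by positivity), add_comm]
    push_cast
    rfl
  have hbound := Exchangeable.card_mul_measure_upperRank_le (X := fun ω i => s i ω) hexch
    (measurable_pi_lambda _ hmeas) (Fin.last n) k
  rw [Fintype.card_fin, measure_univ, mul_one] at hbound
  have hk : (k : ℝ≥0∞) ≤ (n + 1 : ℕ) * ENNReal.ofReal α := by
    rw [← ENNReal.ofReal_natCast, ← ENNReal.ofReal_natCast, ← ENNReal.ofReal_mul (by positivity)]
    refine ENNReal.ofReal_le_ofReal ?_
    push_cast
    linarith [Nat.floor_le (by positivity : 0 ≤ α * (n + 1))]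
  rw [hevent]
  exact (ENNReal.mul_le_mul_iff_right (by simp) (by simp)).1 (hbound.trans hk)
end
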